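/- arXiv:2112.05521 — 2 statements merged into one kernel-verified Lean document; each statement's English description precedes it below -/
import Mathlib

section
/- For every β > 1 and M > 0, the tail sum T(n) := M·exp(-n/β)·Σ_{k=n+1}^{∞} (n/β)^k / k! tends to 0 as n → ∞. -/
/-!
Chernoff bound: for `t ≥ 1` and `k > n`, `x^k / k! ≤ (t x)^k / k! / t^(n+1)`, so the tail
`∑_{k > n} x^k / k!` is at most `exp (t x) / t^(n+1)`. With `x = n/β` and
`t = β` this gives `exp (-n/β) · tail ≤ r^n / β` for `r = exp (1 - 1/β) / β`, and `r < 1`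
because `log β > 1 - 1/β` for `β ≠ 1`.
-/

open Filter Real Nat

lemma tsum_pow_add_div_factorial_le_exp {x : ℝ} (hx : 0 ≤ x) (m : ℕ) :
    ∑' p : ℕ, x ^ (m + p) / (m + p)! ≤ exp x := by
  rw [exp_eq_exp_ℝ, NormedSpace.exp_eq_tsum_div]
  exact tsum_comp_le_tsum_of_inj (summable_pow_div_factorial x) (fun k => by positivity)
    (add_right_injective m)

lemma tsum_pow_add_div_factorial_le_exp_mul_div_pow {x t : ℝ} (hx : 0 ≤ x) (ht : 1 ≤ t)
    (m : ℕ) : ∑' p : ℕ, x ^ (m + p) / (m + p)! ≤ exp (t * x) / t ^ m := by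
  have ht0 : 0 < t := by linarith
  have hsum (y : ℝ) : Summable fun p : ℕ => y ^ (m + p) / (m + p)! := by
    simpa only [add_comm m] using (summable_nat_add_iff m).mpr (summable_pow_div_factorial y)
  calc ∑' p : ℕ, x ^ (m + p) / (m + p)!
      ≤ ∑' p : ℕ, (t * x) ^ (m + p) / (m + p)! / t ^ m := by
        refine (hsum x).tsum_le_tsum (fun p => ?_) ((hsum (t * x)).div_const _)
        rw [mul_pow, pow_add t, mul_div_assoc, mul_div_right_comm, mul_div_cancel_left₀ _
          (pow_ne_zero m ht0.ne')]
        exact le_mul_of_one_le_left (by positivity) (one_le_pow₀ ht)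
    _ = (∑' p : ℕ, (t * x) ^ (m + p) / (m + p)!) / t ^ m := tsum_div_const
    _ ≤ exp (t * x) / t ^ m := by
        gcongr
        exact tsum_pow_add_div_factorial_le_exp (by positivity) m

lemma exp_one_sub_inv_div_lt_one {β : ℝ} (hβ : 1 < β) : exp (1 - β⁻¹) / β < 1 := by
  have hβ0 : 0 < β := by linarith
  have hlog : log β⁻¹ < β⁻¹ - 1 :=
    log_lt_sub_one_of_pos (inv_pos.mpr hβ0) (inv_ne_one.mpr hβ.ne')
  rw [log_inv] at hlog
  rw [div_lt_one hβ0, ← lt_log_iff_exp_lt hβ0]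
  linarith

lemma exp_neg_div_mul_tsum_tail_le {β : ℝ} (hβ : 1 ≤ β) (n : ℕ) :
    exp (-(n : ℝ) / β) * ∑' p : ℕ, ((n : ℝ) / β) ^ (n + 1 + p) / (n + 1 + p)!
      ≤ (exp (1 - β⁻¹) / β) ^ n / β := by
  have hβ0 : 0 < β := by linarith
  have htail := tsum_pow_add_div_factorial_le_exp_mul_div_pow
    (div_nonneg n.cast_nonneg hβ0.le) hβ (n + 1)
  rw [mul_div_cancel₀ _ hβ0.ne'] at htail
  calc exp (-(n : ℝ) / β) * ∑' p : ℕ, ((n : ℝ) / β) ^ (n + 1 + p) / (n + 1 + p)!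
      ≤ exp (-(n : ℝ) / β) * (exp n / β ^ (n + 1)) := by gcongr
    _ = (exp (1 - β⁻¹) / β) ^ n / β := by
        rw [div_pow, ← exp_nat_mul, pow_succ, div_div, ← mul_div_assoc, ← exp_add]
        congr 2
        ring

theorem tail_sum_tendsto_zero_general (β M : ℝ) (hβ : 1 < β) :
    Tendsto (fun n : ℕ =>
        M * Real.exp (-(n : ℝ) / β) *
          ∑' p : ℕ, ((n : ℝ) / β) ^ (n + 1 + p) / (Nat.factorial (n + 1 + p)))
      atTop (nhds 0) := by
  have hβ0 : 0 < β := by linarith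
  have hgeom : Tendsto (fun n : ℕ => (exp (1 - β⁻¹) / β) ^ n / β) atTop (nhds 0) := by
    simpa using (tendsto_pow_atTop_nhds_zero_of_lt_one (by positivity)
      (exp_one_sub_inv_div_lt_one hβ)).div_const β
  have htail := squeeze_zero (fun n => by positivity)
    (exp_neg_div_mul_tsum_tail_le hβ.le) hgeom
  simpa only [mul_assoc, mul_zero] using htail.const_mul M

theorem tail_sum_tendsto_zero (β M : ℝ) (hβ : 1 < β) (hM : 0 < M) :
    Tendsto (fun n : ℕ =>
        M * Real.exp (-(n : ℝ) / β) *
          ∑' p : ℕ, ((n : ℝ) / β) ^ (n + 1 + p) / (Nat.factorial (n + 1 + p)))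
      atTop (nhds 0) :=
  tail_sum_tendsto_zero_general β M hβ
end

section
/- Suppose that for every τ > 0 there is at most one x ∈ (0,1) with Im(ζ(x+iτ)/(x+iτ)) = 0. Then every non-trivial zero of ζ lies on the line Re(s) = 1/2. -/
/-!
A zero `s = σ + iτ` of `ζ` in the critical strip may be taken with `τ > 0` (conjugate it
otherwise). Its reflection `1 - σ + iτ = conj (1 - s)` in the critical line is again a zero, by
the functional equation and `ζ (conj s) = conj (ζ s)`. At both points `ζ(s)/s = 0` is real, so
uniqueness at height `τ` forces `σ = 1 - σ`.
-/

open Complex ComplexConjugate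

theorem riemannZeta_one_sub_eq_zero {s : ℂ} (hs : riemannZeta s = 0) (h0 : 0 < s.re) :
    riemannZeta (1 - s) = 0 := by
  have hs_ne_neg_nat : ∀ n : ℕ, s ≠ -n := fun n hn => by
    have : s.re ≤ 0 := by simp [hn]
    linarith
  have hs_ne_one : s ≠ 1 := fun h1 => riemannZeta_one_ne_zero (h1 ▸ hs)
  rw [riemannZeta_one_sub hs_ne_neg_nat hs_ne_one, hs, mul_zero]

theorem riemannZeta_one_sub_re_add_im_mul_I_eq_zero {s : ℂ} (hs : riemannZeta s = 0)
    (h0 : 0 < s.re) : riemannZeta (↑(1 - s.re) + ↑s.im * I) = 0 := by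
  have hreflect : (↑(1 - s.re) + ↑s.im * I : ℂ) = conj (1 - s) := by
    apply Complex.ext <;> simp
  rw [hreflect, riemannZeta_conj, riemannZeta_one_sub_eq_zero hs h0, map_zero]

theorem rh_of_uniqueness
    (h : ∀ τ : ℝ, 0 < τ → ∀ x ∈ Set.Ioo (0 : ℝ) 1, ∀ y ∈ Set.Ioo (0 : ℝ) 1,
      (riemannZeta (x + τ * Complex.I) / (x + τ * Complex.I)).im = 0 →
      (riemannZeta (y + τ * Complex.I) / (y + τ * Complex.I)).im = 0 → x = y) :
    ∀ s : ℂ, riemannZeta s = 0 → 0 < s.re → s.re < 1 → s.im ≠ 0 → s.re = 1 / 2 := by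
  intro s hs h0 h1 him
  obtain ⟨t, ht, ht_re, ht_im⟩ : ∃ t : ℂ, riemannZeta t = 0 ∧ t.re = s.re ∧ 0 < t.im := by
    rcases him.lt_or_gt with hneg | hpos
    · exact ⟨conj s, by rw [riemannZeta_conj, hs, map_zero], conj_re s, by simpa using hneg⟩
    · exact ⟨s, hs, rfl, hpos⟩
  have hmirror := riemannZeta_one_sub_re_add_im_mul_I_eq_zero ht (ht_re ▸ h0)
  have : t.re = 1 - t.re :=
    h t.im ht_im t.re ⟨ht_re ▸ h0, ht_re ▸ h1⟩ (1 - t.re) ⟨by linarith, by linarith⟩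
      (by rw [re_add_im, ht, zero_div, zero_im]) (by rw [hmirror, zero_div, zero_im])
  linarith
end
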